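/- arXiv:1505.00928 — 4 statements merged into one kernel-verified Lean document; each statement's English description precedes it below -/
import Mathlib

section
/- Let f : ℝ → ℝ be continuous and let F be an antiderivative of f. Let f̂ : ℝ × ℝ → ℝ be a monotone, consistent numerical flux, i.e. f̂ is nondecreasing in its first argument, nonincreasing in its second argument, and f̂(s,s) = f(s) for all s ∈ ℝ. Then for all u, v ∈ ℝ and every k ∈ ℝ: if k ≥ 0 then k·[(v − u)·f̂(u,v) − (F(v) − F(u))] ≤ 0, and if k < 0 then k·[(v − u)·f̂(v,u) − (F(v) − F(u))] ≤ 0. -/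
open MeasureTheory Filter Set

noncomputable section

/-- The sup-norm `‖g‖_∞` of a function `g : ℝ → ℝ`. -/
def supNorm (g : ℝ → ℝ) : ℝ := ⨆ x, |g x|

/-- The total variation `TV(k)` of a function `k : ℝ → ℝ`. -/
def totalVar (k : ℝ → ℝ) : ℝ := (eVariationOn k Set.univ).toReal

/-- The Engquist–Osher numerical flux associated to `f`. -/
def eoFlux (f : ℝ → ℝ) (u v : ℝ) : ℝ :=
  (f u + f v) / 2 - (∫ s in u..v, |deriv f s|) / 2

/-- The cell averages `k_{j+1/2} = (1/Δx) ∫_{x_j}^{x_{j+1}} k`. -/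
def kAvg (k : ℝ → ℝ) (dx : ℝ) (j : ℤ) : ℝ :=
  (1 / dx) * ∫ x in ((j : ℝ) * dx)..((j : ℝ) * dx + dx), k x

/-- The sign-adapted Engquist–Osher flux `f̂_{j+1/2}`, with arguments transposed when the
coefficient `kh j` is negative. -/
def signFlux (f : ℝ → ℝ) (kh : ℤ → ℝ) (v : ℤ → ℝ) (j : ℤ) : ℝ :=
  if 0 ≤ kh j then eoFlux f (v j) (v (j + 1)) else eoFlux f (v (j + 1)) (v j)

/-- The numerical flux `h_{j+1/2} = k_{j+1/2} f̂_{j+1/2}`. -/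
def numFlux (f k : ℝ → ℝ) (dx : ℝ) (v : ℤ → ℝ) (j : ℤ) : ℝ :=
  kAvg k dx j * signFlux f (kAvg k dx) v j

/-- Backward difference `D₋v_j = (v_j - v_{j-1})/Δx`. -/
def Dm (dx : ℝ) (v : ℤ → ℝ) (j : ℤ) : ℝ := (v j - v (j - 1)) / dx

/-- Forward difference `D₊v_j = (v_{j+1} - v_j)/Δx`. -/
def Dp (dx : ℝ) (v : ℤ → ℝ) (j : ℤ) : ℝ := (v (j + 1) - v j) / dx

/-- The square of the discrete `ℓ²` norm: `‖v‖² = Δx Σ_j v_j²`. -/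
def l2sq (dx : ℝ) (v : ℤ → ℝ) : ℝ := dx * ∑' j : ℤ, (v j) ^ 2

/-- The fully-discrete capillarity scheme
`D₊ᵗu^n_j + D₋h^n_{j+1/2} = βΔx·D₊D₋u^n_j + γμ(Δx)·D₊ᵗD₊D₋u^n_j`
with initial data the cell averages of `u0`. -/
def capScheme (f k u0 : ℝ → ℝ) (β γ μ dx dt : ℝ) (u : ℕ → ℤ → ℝ) : Prop :=
  (∀ j : ℤ, u 0 j =
      (1 / dx) * ∫ x in ((j : ℝ) * dx - dx / 2)..((j : ℝ) * dx + dx / 2), u0 x) ∧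
  ∀ (n : ℕ) (j : ℤ),
    (u (n + 1) j - u n j) / dt + Dm dx (numFlux f k dx (u n)) j
      = β * dx * Dp dx (Dm dx (u n)) j
        + γ * μ * ((Dp dx (Dm dx (u (n + 1))) j - Dp dx (Dm dx (u n)) j) / dt)

/-- The fully-discrete diffusive–dispersive scheme
`D₊ᵗu^n_j + D₋h^n_{j+1/2} = βΔx·D₊D₋u^n_j + γμ(Δx)·D₊D₋D₋u^n_j`
with initial data the cell averages of `u0`. -/
def ddScheme (f k u0 : ℝ → ℝ) (β γ μ dx dt : ℝ) (u : ℕ → ℤ → ℝ) : Prop :=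
  (∀ j : ℤ, u 0 j =
      (1 / dx) * ∫ x in ((j : ℝ) * dx - dx / 2)..((j : ℝ) * dx + dx / 2), u0 x) ∧
  ∀ (n : ℕ) (j : ℤ),
    (u (n + 1) j - u n j) / dt + Dm dx (numFlux f k dx (u n)) j
      = β * dx * Dp dx (Dm dx (u n)) j
        + γ * μ * Dp dx (Dm dx (Dm dx (u n))) j

/-- The CFL condition for the capillarity scheme. -/
def cflCap (f k : ℝ → ℝ) (β γ μ dx dt δ : ℝ) : Prop :=
  max (2 * max (supNorm f) (max (supNorm (deriv f)) (supNorm k)) + (dt / dx) / 2)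
      ((dt / dx) / 2 * (1 + β * dx ^ 2 / (γ * μ)))
    ≤ min (1 - δ) (β - δ)

/-- The explicit CFL condition for the diffusive–dispersive scheme. -/
def cflDD (f k : ℝ → ℝ) (β γ μ dx dt δ : ℝ) : Prop :=
  max (2 * (dt / dx) * (β ^ 2 * dx ^ 2 / (γ * μ) + 2 * γ * μ / dx ^ 2))
      (8 * (dt / dx) * supNorm k ^ 2 * supNorm (deriv f) ^ 2)
    ≤ min (1 - δ) (β - δ)

/-- The piecewise-constant interpolant `u_{Δx}(x,t) = u^n_j` on
`[x_{j-1/2}, x_{j+1/2}) × [t^n, t^{n+1})`. -/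
def pcInterp (dx dt : ℝ) (u : ℕ → ℤ → ℝ) (p : ℝ × ℝ) : ℝ :=
  u (⌊p.2 / dt⌋.toNat) ⌊p.1 / dx + 1 / 2⌋

/-- Finite support of the grid function at each time level. -/
def finSupp (u : ℕ → ℤ → ℝ) : Prop :=
  ∀ n : ℕ, ∃ J : ℕ, ∀ j : ℤ, (J : ℤ) < |j| → u n j = 0

/-- The `i`-th open interval of the partition of `ℝ` induced by the points `ξ 0 < ⋯ < ξ (M-1)`. -/
def pieceSet (M : ℕ) (ξ : Fin M → ℝ) (i : Fin (M + 1)) : Set ℝ :=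
  {x | (∀ m : Fin M, (m : ℕ) < (i : ℕ) → ξ m < x) ∧ (∀ m : Fin M, (i : ℕ) ≤ (m : ℕ) → x < ξ m)}

/-- `k` is piecewise Lipschitz: on each piece of the partition induced by `ξ`, it agrees with a
globally Lipschitz function (in particular it is Lipschitz on the closure of each piece, up to
redefining it at the partition points). -/
def piecewiseLip (M : ℕ) (ξ : Fin M → ℝ) (k : ℝ → ℝ) : Prop :=
  ∀ i : Fin (M + 1), ∃ (κ : ℝ → ℝ) (L : NNReal),
    LipschitzWith L κ ∧ ∀ x ∈ pieceSet M ξ i, k x = κ x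

end

/-- For a monotone, consistent numerical flux `f̂` and an antiderivative `F` of the
continuous flux `f`, the quantity `k·[(v−u)·f̂ − (F(v)−F(u))]` is nonpositive, with the arguments
of `f̂` transposed when `k < 0`. -/
theorem monotone_flux_cell_entropy (f F : ℝ → ℝ) (fh : ℝ → ℝ → ℝ)
    (hf : Continuous f)
    (hF : ∀ x, HasDerivAt F (f x) x)
    (hmono : ∀ v, Monotone fun u => fh u v)
    (hanti : ∀ u, Antitone fun v => fh u v)
    (hcons : ∀ s, fh s s = f s) :
    ∀ u v k : ℝ,
      (0 ≤ k → k * ((v - u) * fh u v - (F v - F u)) ≤ 0) ∧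
      (k < 0 → k * ((v - u) * fh v u - (F v - F u)) ≤ 0) := by
  have hInt : ∀ u v : ℝ, F v - F u = ∫ s in u..v, f s := by
    intro u v
    rw [intervalIntegral.integral_eq_sub_of_hasDerivAt (fun x _ => hF x)
      (hf.intervalIntegrable u v)]
  have key : ∀ u v : ℝ, (v - u) * fh u v ≤ F v - F u := by
    intro u v
    rw [hInt]
    rcases le_total u v with h | h
    · have hle : ∀ s ∈ Set.Icc u v, fh u v ≤ f s := by
        intro s hs
        calc fh u v ≤ fh s v := hmono v hs.1
          _ ≤ fh s s := hanti s hs.2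
          _ = f s := hcons s
      calc (v - u) * fh u v = ∫ _ in u..v, fh u v := by
            rw [intervalIntegral.integral_const, smul_eq_mul]
        _ ≤ ∫ s in u..v, f s := intervalIntegral.integral_mono_on h
            intervalIntegrable_const (hf.intervalIntegrable u v) hle
    · have hle : ∀ s ∈ Set.Icc v u, f s ≤ fh u v := by
        intro s hs
        calc f s = fh s s := (hcons s).symm
          _ ≤ fh u s := hmono s hs.2
          _ ≤ fh u v := hanti u hs.1
      have h2 : (∫ s in v..u, f s) ≤ (u - v) * fh u v := by
        calc (∫ s in v..u, f s) ≤ ∫ _ in v..u, fh u v :=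
              intervalIntegral.integral_mono_on h (hf.intervalIntegrable v u)
                intervalIntegrable_const hle
          _ = (u - v) * fh u v := by
              rw [intervalIntegral.integral_const, smul_eq_mul]
      rw [intervalIntegral.integral_symm]
      linarith
  intro u v k
  constructor
  · intro hk
    have h1 := key u v
    have : (v - u) * fh u v - (F v - F u) ≤ 0 := by linarith
    exact mul_nonpos_of_nonneg_of_nonpos hk this
  · intro hk
    have h1 := key v u
    have : 0 ≤ (v - u) * fh v u - (F v - F u) := by nlinarith [h1]
    exact mul_nonpos_of_nonpos_of_nonneg hk.le this
end

section
/- Let f ∈ C¹(ℝ) be bounded with bounded derivative, let f̂ be its Engquist–Osher flux, let F be the antiderivative of f with F(0) = 0, and let k ∈ L^∞(ℝ) ∩ BV(ℝ) with cell averages k_{j+1/2} = (1/Δx)∫_{x_j}^{x_{j+1}} k(x) dx. Let (u_j)_{j∈ℤ} be real numbers with a′ ≤ u_j ≤ b′ for all j, where a′ ≤ 0 ≤ b′, and u_j = 0 for all |j| sufficiently large. Define the sign-adapted numerical flux h_{j+1/2} = k_{j+1/2} f̂(u_j, u_{j+1}) if k_{j+1/2} ≥ 0 and h_{j+1/2}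 = k_{j+1/2} f̂(u_{j+1}, u_j) if k_{j+1/2} < 0. Then Δx Σ_{j∈ℤ} u_j · D₋h_{j+1/2} ≥ − max_{s∈[a′,b′]} |F(s)| · Σ_{j∈ℤ} |k_{j+1/2} − k_{j−1/2}|, and in particular the left-hand side is bounded below by −max_{s∈[a′,b′]}|F(s)| · TV(k), where TV(k) denotes the total variation of k. -/
/-!
Summation by parts moves the difference onto `u`:
`Δx Σ u_j D₋h_{j+1/2} = Σ (u_j - u_{j+1}) h_{j+1/2}`. The trapezoid error bound for `∫_u^v f`
gives `(v - u) f̂(u,v) ≤ F(v) - F(u)` for all `u, v`; applied with the arguments ordered by the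
sign of `k_{j+1/2}`, it yields `(u_j - u_{j+1}) h_{j+1/2} ≥ k_{j+1/2} (F(u_j) - F(u_{j+1}))`.
A second summation by parts (using `F(0) = 0`) turns the right side into
`Σ F(u_j) (k_{j+1/2} - k_{j-1/2}) ≥ -max |F| · Σ |k_{j+1/2} - k_{j-1/2}|`. Finally, each
`k_{j+1/2} - k_{j-1/2}` is the average over `y ∈ [0, Δx]` of `k(y + jΔx) - k(y + (j-1)Δx)`, and
for every fixed `y` these increments have total size at most `TV(k)`.
-/

open MeasureTheory Filter Set

open Function intervalIntegral

section EngquistOsher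

variable {f F : ℝ → ℝ}

theorem abs_sub_le_integral_abs_deriv (hf : ContDiff ℝ 1 f) {a b : ℝ} (hab : a ≤ b) :
    |f b - f a| ≤ ∫ t in a..b, |deriv f t| :=
  norm_sub_le_integral_of_norm_deriv_le_of_le hab hf.continuous.continuousOn
    (hf.differentiable one_ne_zero).differentiableOn (ae_of_all _ fun _ _ => le_rfl)
    ((hf.continuous_deriv le_rfl).norm.intervalIntegrable _ _)

theorem abs_integral_sub_trapezoid_le (hf : ContDiff ℝ 1 f) {u v : ℝ} (huv : u ≤ v) :
    |(∫ s in u..v, f s) - (v - u) * ((f u + f v) / 2)|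
      ≤ (v - u) / 2 * ∫ s in u..v, |deriv f s| := by
  have hdf : Continuous fun s => |deriv f s| := (hf.continuous_deriv le_rfl).abs
  have hmid : ∀ s ∈ uIoc u v, |f s - (f u + f v) / 2| ≤ (∫ s in u..v, |deriv f s|) / 2 := by
    intro s hs
    rw [uIoc_of_le huv] at hs
    have hleft := abs_sub_le_integral_abs_deriv hf hs.1.le
    have hright := abs_sub_le_integral_abs_deriv hf hs.2
    rw [← integral_add_adjacent_intervals (hdf.intervalIntegrable u s)
      (hdf.intervalIntegrable s v)]
    rw [abs_le] at hleft hright ⊢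
    constructor <;> linarith
  have hconst : (∫ s in u..v, f s) - (v - u) * ((f u + f v) / 2)
      = ∫ s in u..v, (f s - (f u + f v) / 2) := by
    rw [integral_sub (hf.continuous.intervalIntegrable _ _) intervalIntegrable_const,
      intervalIntegral.integral_const, smul_eq_mul]
  rw [hconst]
  calc |∫ s in u..v, (f s - (f u + f v) / 2)|
      ≤ (∫ s in u..v, |deriv f s|) / 2 * |v - u| := by
        simpa only [Real.norm_eq_abs] using norm_integral_le_of_norm_le_const
          fun s hs => (Real.norm_eq_abs _).trans_le (hmid s hs)
    _ = (v - u) / 2 * ∫ s in u..v, |deriv f s| := by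
        rw [abs_of_nonneg (sub_nonneg.2 huv)]; ring

theorem sub_mul_eoFlux_le (hf : ContDiff ℝ 1 f) (hF : ∀ x, HasDerivAt F (f x) x)
    (u v : ℝ) : (v - u) * eoFlux f u v ≤ F v - F u := by
  have hFTC (a b : ℝ) : ∫ s in a..b, f s = F b - F a :=
    integral_eq_sub_of_hasDerivAt (fun x _ => hF x) (hf.continuous.intervalIntegrable _ _)
  unfold eoFlux
  rcases le_total u v with huv | hvu
  · have := abs_integral_sub_trapezoid_le hf huv
    rw [hFTC, abs_le] at this
    linarith [this.1]
  · have := abs_integral_sub_trapezoid_le hf hvu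
    rw [hFTC, abs_le] at this
    rw [integral_symm v u]
    linarith [this.2]

theorem sub_mul_le_sub_mul_signFlux (hf : ContDiff ℝ 1 f)
    (hF : ∀ x, HasDerivAt F (f x) x) (kh v : ℤ → ℝ) (j : ℤ) :
    (F (v j) - F (v (j + 1))) * kh j ≤ (v j - v (j + 1)) * (kh j * signFlux f kh v j) := by
  unfold signFlux
  split_ifs with hk
  · have := mul_le_mul_of_nonneg_right (sub_mul_eoFlux_le hf hF (v j) (v (j + 1))) hk
    linarith
  · have := mul_le_mul_of_nonpos_right (sub_mul_eoFlux_le hf hF (v (j + 1)) (v j))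
      (not_le.1 hk).le
    linarith

end EngquistOsher

section FinitelySupportedSums

theorem hasFiniteSupport_of_eq_zero_of_lt_abs {R : Type*} [Zero R] {a : ℤ → R} (J : ℕ)
    (ha : ∀ j : ℤ, (J : ℤ) < |j| → a j = 0) : a.HasFiniteSupport :=
  (finite_Icc (-(J : ℤ)) J).subset fun j hj =>
    by_contra fun hj' => hj (ha j (not_le.1 fun h => hj' (abs_le.1 h)))

theorem Function.HasFiniteSupport.fun_sub_succ {R : Type*} [AddGroup R] {a : ℤ → R}
    (ha : a.HasFiniteSupport) : HasFiniteSupport fun j => a j - a (j + 1) :=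
  ha.sub (ha.comp_of_injective (add_left_injective 1))

theorem tsum_mul_sub_pred_eq {R : Type*} [CommRing R] [TopologicalSpace R]
    [IsTopologicalAddGroup R] [T2Space R] {a : ℤ → R} (ha : a.HasFiniteSupport) (b : ℤ → R) :
    ∑' j, a j * (b j - b (j - 1)) = ∑' j, (a j - a (j + 1)) * b j := by
  have ha' : HasFiniteSupport fun j => a (j + 1) := ha.comp_of_injective (add_left_injective 1)
  have shift : ∑' j, a j * b (j - 1) = ∑' j, a (j + 1) * b j := by
    rw [← (Equiv.addRight (1 : ℤ)).tsum_eq]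
    simp
  simp only [mul_sub, sub_mul]
  rw [Summable.tsum_sub, Summable.tsum_sub, shift]
  all_goals
    exact summable_of_hasFiniteSupport (HasFiniteSupport.fun_mul_left (by assumption) _)

theorem neg_mul_tsum_abs_le_tsum_mul {ι : Type*} {b c : ι → ℝ} {M : ℝ}
    (hb : b.HasFiniteSupport) (hbM : ∀ i, |b i| ≤ M) (hc : Summable fun i => |c i|) :
    -M * ∑' i, |c i| ≤ ∑' i, b i * c i := by
  rw [← tsum_mul_left]
  refine Summable.tsum_le_tsum (fun i => ?_) (hc.mul_left _)
    (summable_of_hasFiniteSupport (hb.fun_mul_left _))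
  rw [neg_mul]
  refine (neg_le_neg ?_).trans (neg_abs_le _)
  rw [abs_mul]
  exact mul_le_mul_of_nonneg_right (hbM i) (abs_nonneg _)

end FinitelySupportedSums

section DiscreteFluxBound

theorem mul_tsum_mul_Dm {dx : ℝ} (hdx : dx ≠ 0) (v h : ℤ → ℝ) :
    dx * ∑' j, v j * Dm dx h j = ∑' j, v j * (h j - h (j - 1)) := by
  rw [← tsum_mul_left]
  congr 1 with j
  unfold Dm
  field_simp

theorem tsum_mul_sub_pred_le_tsum_mul_flux_sub {f F : ℝ → ℝ} (hf : ContDiff ℝ 1 f)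
    (hF : ∀ x, HasDerivAt F (f x) x) (hF0 : F 0 = 0) (kh : ℤ → ℝ) {v : ℤ → ℝ}
    (hv : v.HasFiniteSupport) :
    ∑' j, F (v j) * (kh j - kh (j - 1))
      ≤ ∑' j, v j * (kh j * signFlux f kh v j - kh (j - 1) * signFlux f kh v (j - 1)) := by
  have hFv : HasFiniteSupport fun j => F (v j) := hv.fun_comp hF0
  rw [tsum_mul_sub_pred_eq hFv, tsum_mul_sub_pred_eq hv]
  exact Summable.tsum_le_tsum (fun j => sub_mul_le_sub_mul_signFlux hf hF kh v j)
    (summable_of_hasFiniteSupport (hFv.fun_sub_succ.fun_mul_left _))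
    (summable_of_hasFiniteSupport (hv.fun_sub_succ.fun_mul_left _))

end DiscreteFluxBound

section CellAverages

variable {k : ℝ → ℝ}

theorem LocallyBoundedVariationOn.locallyIntegrable (hk : LocallyBoundedVariationOn k univ) :
    LocallyIntegrable k volume := by
  obtain ⟨p, q, hp, hq, rfl⟩ := hk.exists_monotoneOn_sub_monotoneOn
  exact (monotoneOn_univ.1 hp).locallyIntegrable.sub (monotoneOn_univ.1 hq).locallyIntegrable

theorem sum_abs_sub_le_totalVar (hk : BoundedVariationOn k univ) {p : ℕ → ℝ}
    (hp : Monotone p) (n : ℕ) :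
    ∑ i ∈ Finset.range n, |k (p (i + 1)) - k (p i)| ≤ totalVar k := by
  have h := eVariationOn.sum_le (f := k) (n := n) hp (fun i => mem_univ (p i))
  rw [← ENNReal.toReal_le_toReal (ne_top_of_le_ne_top hk h) hk,
    ENNReal.toReal_sum fun _ _ => edist_ne_top _ _] at h
  simpa [totalVar, edist_dist, Real.dist_eq] using h

theorem sum_abs_comp_sub_le_totalVar (hk : BoundedVariationOn k univ) {p : ℤ → ℝ}
    (hp : Monotone p) (s : Finset ℤ) :
    ∑ j ∈ s, |k (p j) - k (p (j - 1))| ≤ totalVar k := by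
  set N : ℕ := s.sup Int.natAbs
  have hs : s ⊆ (Finset.range (2 * N + 1)).image fun i : ℕ => (i : ℤ) - N := by
    intro j hj
    have := Finset.le_sup (f := Int.natAbs) hj
    simp only [Finset.mem_image, Finset.mem_range]
    exact ⟨(j + N).toNat, by omega, by omega⟩
  calc ∑ j ∈ s, |k (p j) - k (p (j - 1))|
      ≤ ∑ j ∈ (Finset.range (2 * N + 1)).image (fun i : ℕ => (i : ℤ) - N),
          |k (p j) - k (p (j - 1))| :=
        Finset.sum_le_sum_of_subset_of_nonneg hs fun _ _ _ => abs_nonneg _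
    _ = ∑ i ∈ Finset.range (2 * N + 1),
          |k (p ((i + 1 : ℕ) - N - 1)) - k (p ((i : ℕ) - N - 1))| := by
        rw [Finset.sum_image fun _ _ _ _ h => by simpa using h]
        refine Finset.sum_congr rfl fun i _ => ?_
        congr 4
        push_cast
        ring
    _ ≤ totalVar k :=
        sum_abs_sub_le_totalVar hk (p := fun i : ℕ => p (i - N - 1))
          (fun i i' h => hp (by omega)) _

theorem kAvg_eq_integral_comp_add (dx : ℝ) (j : ℤ) :
    kAvg k dx j = 1 / dx * ∫ y in 0..dx, k (y + j * dx) := by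
  rw [integral_comp_add_right, zero_add, add_comm dx, kAvg]

theorem sum_abs_kAvg_sub_le_totalVar {dx : ℝ} (hdx : 0 < dx)
    (hk : BoundedVariationOn k univ) (s : Finset ℤ) :
    ∑ j ∈ s, |kAvg k dx j - kAvg k dx (j - 1)| ≤ totalVar k := by
  set d : ℤ → ℝ → ℝ := fun j y => k (y + j * dx) - k (y + ↑(j - 1) * dx)
  have hshift (c : ℝ) : IntervalIntegrable (fun y => k (y + c)) volume 0 dx := by
    simpa using ((hk.locallyBoundedVariationOn.locallyIntegrable.integrableOn_isCompact
      isCompact_uIcc).intervalIntegrable (a := 0 + c) (b := dx + c)).comp_add_right c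
  have hint (j : ℤ) : IntervalIntegrable (fun y => |d j y|) volume 0 dx :=
    ((hshift _).sub (hshift _)).abs
  have hterm (j : ℤ) : |kAvg k dx j - kAvg k dx (j - 1)| ≤ 1 / dx * ∫ y in 0..dx, |d j y| := by
    rw [kAvg_eq_integral_comp_add, kAvg_eq_integral_comp_add, ← mul_sub,
      ← integral_sub (hshift _) (hshift _), abs_mul, abs_of_pos (one_div_pos.2 hdx)]
    exact mul_le_mul_of_nonneg_left (abs_integral_le_integral_abs hdx.le) (one_div_pos.2 hdx).le
  calc ∑ j ∈ s, |kAvg k dx j - kAvg k dx (j - 1)|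
      ≤ ∑ j ∈ s, 1 / dx * ∫ y in 0..dx, |d j y| := Finset.sum_le_sum fun j _ => hterm j
    _ = 1 / dx * ∫ y in 0..dx, ∑ j ∈ s, |d j y| := by
        rw [← Finset.mul_sum, integral_finsetSum fun j _ => hint j]
    _ ≤ 1 / dx * ∫ _ in 0..dx, totalVar k := by
        gcongr
        refine integral_mono_on hdx.le ?_ intervalIntegrable_const fun y _ => ?_
        · simpa only [Finset.sum_fn] using IntervalIntegrable.sum s fun j _ => hint j
        exact sum_abs_comp_sub_le_totalVar hk (p := fun j : ℤ => y + j * dx)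
          (fun i i' h => by dsimp only; gcongr) s
    _ = totalVar k := by
        rw [intervalIntegral.integral_const, smul_eq_mul, sub_zero]
        field_simp

end CellAverages

theorem flux_term_lower_bound_general (f F k : ℝ → ℝ) (u : ℤ → ℝ) (dx a' b' : ℝ)
    (hdx : 0 < dx)
    (hf : ContDiff ℝ 1 f)
    (hF : ∀ x, HasDerivAt F (f x) x) (hF0 : F 0 = 0)
    (hkBV : BoundedVariationOn k Set.univ)
    (hu : ∀ j, u j ∈ Set.Icc a' b')
    (hsupp : ∃ J : ℕ, ∀ j : ℤ, (J : ℤ) < |j| → u j = 0) :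
    dx * ∑' j : ℤ, u j * Dm dx (numFlux f k dx u) j
        ≥ -(sSup ((fun s => |F s|) '' Set.Icc a' b')) *
            ∑' j : ℤ, |kAvg k dx j - kAvg k dx (j - 1)| ∧
    dx * ∑' j : ℤ, u j * Dm dx (numFlux f k dx u) j
        ≥ -(sSup ((fun s => |F s|) '' Set.Icc a' b')) * totalVar k := by
  obtain ⟨J, hJ⟩ := hsupp
  set M := sSup ((fun s => |F s|) '' Set.Icc a' b')
  have hFM (j : ℤ) : |F (u j)| ≤ M :=
    le_csSup ((isCompact_Icc.image (continuous_abs.comp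
      (continuous_iff_continuousAt.2 fun x => (hF x).continuousAt))).bddAbove)
      (mem_image_of_mem _ (hu j))
  have hu_fin := hasFiniteSupport_of_eq_zero_of_lt_abs J hJ
  have hvar : Summable fun j => |kAvg k dx j - kAvg k dx (j - 1)| :=
    summable_of_sum_le (fun _ => abs_nonneg _) (sum_abs_kAvg_sub_le_totalVar hdx hkBV)
  have hmain : -M * ∑' j, |kAvg k dx j - kAvg k dx (j - 1)|
      ≤ dx * ∑' j, u j * Dm dx (numFlux f k dx u) j :=
    calc -M * ∑' j, |kAvg k dx j - kAvg k dx (j - 1)|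
        ≤ ∑' j, F (u j) * (kAvg k dx j - kAvg k dx (j - 1)) :=
          neg_mul_tsum_abs_le_tsum_mul (hu_fin.fun_comp hF0) hFM hvar
      _ ≤ ∑' j, u j * (numFlux f k dx u j - numFlux f k dx u (j - 1)) :=
          tsum_mul_sub_pred_le_tsum_mul_flux_sub hf hF hF0 (kAvg k dx) hu_fin
      _ = dx * ∑' j, u j * Dm dx (numFlux f k dx u) j := (mul_tsum_mul_Dm hdx.ne' u _).symm
  refine ⟨hmain, le_trans ?_ hmain⟩
  exact mul_le_mul_of_nonpos_left
    (hvar.tsum_le_of_sum_le (sum_abs_kAvg_sub_le_totalVar hdx hkBV))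
    (neg_nonpos.2 ((abs_nonneg _).trans (hFM 0)))

/-- discrete lower bound for the flux term `Δx Σ_j u_j D₋h_{j+1/2}` in terms of the
maximum of `|F|` on `[a',b']` and the variation of the cell averages of `k`, respectively the
total variation of `k`. -/
theorem flux_term_lower_bound (f F k : ℝ → ℝ) (u : ℤ → ℝ) (dx a' b' : ℝ)
    (hdx : 0 < dx)
    (hf : ContDiff ℝ 1 f)
    (hfb : ∃ C, ∀ x, |f x| ≤ C)
    (hf'b : ∃ C, ∀ x, |deriv f x| ≤ C)
    (hF : ∀ x, HasDerivAt F (f x) x) (hF0 : F 0 = 0)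
    (hkb : ∃ C, ∀ x, |k x| ≤ C)
    (hkBV : BoundedVariationOn k Set.univ)
    (hkloc : LocallyIntegrable k volume)
    (hab : a' ≤ 0 ∧ 0 ≤ b')
    (hu : ∀ j, u j ∈ Set.Icc a' b')
    (hsupp : ∃ J : ℕ, ∀ j : ℤ, (J : ℤ) < |j| → u j = 0) :
    dx * ∑' j : ℤ, u j * Dm dx (numFlux f k dx u) j
        ≥ -(sSup ((fun s => |F s|) '' Set.Icc a' b')) *
            ∑' j : ℤ, |kAvg k dx j - kAvg k dx (j - 1)| ∧
    dx * ∑' j : ℤ, u j * Dm dx (numFlux f k dx u) j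
        ≥ -(sSup ((fun s => |F s|) '' Set.Icc a' b')) * totalVar k :=
  flux_term_lower_bound_general f F k u dx a' b' hdx hf hF hF0 hkBV hu hsupp
end

section
/- Let T = NΔt for some N ∈ ℕ. Let G : ℝ × ℝ → ℝ satisfy |G(κ₁, s) − G(κ₂, s)| ≤ L|κ₁ − κ₂| for all κ₁, κ₂ ∈ ℝ and all s ∈ [a′, b′]. Let (k_{j+1/2})_{j∈ℤ} be real numbers with Σ_{j∈ℤ} |k_{j+1/2} − k_{j−1/2}| ≤ V < ∞, let u^n_j ∈ [a′, b′] for all j ∈ ℤ and 0 ≤ n ≤ N−1, and let g ∈ L²(ℝ × (0,T)). Then |Σ_{j∈ℤ} Σ_{n=0}^{N−1} ∫_{t^n}^{t^{n+1}} ∫_{x_j}^{x_{j+1/2}} (G(k_{j+1/2}, u^n_j) − G(k_{j−1/2}, u^n_j))·g(x,t) dx dt| ≤ L·V·Δx^{1/2}·T^{1/2}·‖g‖_{L²(ℝ×(0,T))}. -/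
open MeasureTheory Filter Set

/-! For fixed `j` the coefficient `G(k_{j+1/2}, u^n_j) − G(k_{j−1/2}, u^n_j)` is bounded by
`L |k_{j+1/2} − k_{j−1/2}|` uniformly in `n`, and the time slabs tile `(0, T)`, so the `j`-th term
is at most this constant times `∫ |g|` over the strip `(x_j, x_{j+1/2}) × (0, T)`. Cauchy–Schwarz
on the strip, of area `TΔx/2`, bounds that integral by `(Δx T)^{1/2} ‖g‖_{L²}`, and summing the
jumps of `k` over `j` gives the factor `V`. -/

theorem integral_abs_le_sqrt_measureReal_mul_sqrt_integral_sq {α : Type*} [MeasurableSpace α]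
    {μ : Measure α} [IsFiniteMeasure μ] {f : α → ℝ} (hf : MemLp f 2 μ) :
    ∫ x, |f x| ∂μ ≤ √(μ.real univ) * √(∫ x, f x ^ 2 ∂μ) := by
  have h2 : ENNReal.ofReal 2 = 2 := by norm_num
  have holder := integral_mul_le_Lp_mul_Lq_of_nonneg Real.HolderConjugate.two_two
    (Eventually.of_forall fun x => abs_nonneg (f x)) (Eventually.of_forall fun _ => zero_le_one)
    (h2 ▸ hf.abs) (h2 ▸ memLp_const (1 : ℝ))
  simp only [mul_one, Real.rpow_two, sq_abs, one_pow, integral_const, smul_eq_mul,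
    ← Real.sqrt_eq_rpow] at holder
  linarith

theorem abs_sum_mul_setIntegral_le {α ι : Type*} [MeasurableSpace α] {μ : Measure α}
    {φ : α → ℝ} {s : Set α} {I : Finset ι} {t : ι → Set α} {c : ι → ℝ} {K : ℝ}
    (hφ : IntegrableOn φ s μ) (ht : ∀ i ∈ I, MeasurableSet (t i))
    (hdisj : (I : Set ι).PairwiseDisjoint t) (hts : ∀ i ∈ I, t i ⊆ s) (hK : 0 ≤ K)
    (hc : ∀ i ∈ I, |c i| ≤ K) :
    |∑ i ∈ I, c i * ∫ x in t i, φ x ∂μ| ≤ K * ∫ x in s, |φ x| ∂μ := by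
  have hunion : (⋃ i ∈ I, t i) ⊆ s := iUnion₂_subset hts
  calc |∑ i ∈ I, c i * ∫ x in t i, φ x ∂μ|
      ≤ ∑ i ∈ I, |c i| * |∫ x in t i, φ x ∂μ| := by
        simp only [← abs_mul]
        exact Finset.abs_sum_le_sum_abs _ _
    _ ≤ ∑ i ∈ I, K * ∫ x in t i, |φ x| ∂μ := by
        gcongr with i hi
        · exact hc i hi
        · exact abs_integral_le_integral_abs
    _ = K * ∫ x in ⋃ i ∈ I, t i, |φ x| ∂μ := by
        rw [← Finset.mul_sum, integral_biUnion_finset I ht hdisj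
          fun i hi => (hφ.mono_set (hts i hi)).abs]
    _ ≤ K * ∫ x in s, |φ x| ∂μ :=
        mul_le_mul_of_nonneg_left (setIntegral_mono_set hφ.abs
          (Eventually.of_forall fun x => abs_nonneg _) hunion.eventuallyLE) hK

theorem intervalIntegral_intervalIntegral_eq_setIntegral_Ioo_prod {E : Type*}
    [NormedAddCommGroup E] [NormedSpace ℝ E] {F : ℝ → ℝ → E} {a b c d : ℝ}
    (hab : a ≤ b) (hcd : c ≤ d) (hF : IntegrableOn (Function.uncurry F) (Ioo a b ×ˢ Ioo c d)) :
    ∫ y in c..d, ∫ x in a..b, F x y = ∫ p in Ioo a b ×ˢ Ioo c d, F p.1 p.2 := by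
  simp_rw [intervalIntegral.integral_of_le hab, intervalIntegral.integral_of_le hcd,
    integral_Ioc_eq_integral_Ioo]
  rw [Measure.volume_eq_prod, ← setIntegral_prod_swap, setIntegral_prod]
  · rfl
  · rw [IntegrableOn, Measure.volume_eq_prod, ← Measure.prod_restrict] at hF
    rw [IntegrableOn, ← Measure.prod_restrict]
    exact hF.swap

theorem pairwiseDisjoint_prod_Ioo_mul_succ_mul {α : Type*} {s : Set α} {dt : ℝ} (hdt : 0 ≤ dt)
    (I : Set ℕ) : I.PairwiseDisjoint fun n : ℕ => s ×ˢ Ioo (n * dt) ((n + 1) * dt) := by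
  have hmono : Monotone fun n : ℕ => (n : ℝ) * dt := fun _ _ h =>
    mul_le_mul_of_nonneg_right (Nat.cast_le.2 h) hdt
  intro m _ n _ hmn
  refine disjoint_prod.2 (Or.inr ?_)
  simpa [Function.onFun] using hmono.pairwise_disjoint_on_Ioo_succ hmn

theorem abs_sum_integral_strip_le {g : ℝ → ℝ → ℝ} {c : ℕ → ℝ} {a b dt K : ℝ} {N : ℕ}
    (hab : a ≤ b) (hdt : 0 ≤ dt) (hK : 0 ≤ K) (hc : ∀ n < N, |c n| ≤ K)
    (hg : MemLp (fun p : ℝ × ℝ => g p.1 p.2) 2 (volume.restrict (univ ×ˢ Ioo 0 (N * dt)))) :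
    |∑ n ∈ Finset.range N, ∫ t in (n * dt)..((n + 1) * dt), ∫ x in a..b, c n * g x t|
      ≤ K * √((b - a) * (N * dt)) * √(∫ p in univ ×ˢ Ioo 0 (N * dt), g p.1 p.2 ^ 2) := by
  set strip := Ioo a b ×ˢ Ioo (0 : ℝ) (N * dt)
  set slab : ℕ → Set (ℝ × ℝ) := fun n => Ioo a b ×ˢ Ioo (n * dt) ((n + 1) * dt)
  have hstrip : strip ⊆ univ ×ˢ Ioo 0 (N * dt) := prod_mono (subset_univ _) le_rfl
  have hslab : ∀ n < N, slab n ⊆ strip := fun n hn => by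
    have : ((n : ℝ) + 1) * dt ≤ N * dt :=
      mul_le_mul_of_nonneg_right (by exact_mod_cast Nat.succ_le_of_lt hn) hdt
    exact prod_mono le_rfl (Ioo_subset_Ioo (by positivity) this)
  have hvol : volume strip = ENNReal.ofReal ((b - a) * (N * dt)) := by
    rw [Measure.volume_eq_prod, Measure.prod_prod, Real.volume_Ioo, Real.volume_Ioo, sub_zero,
      ENNReal.ofReal_mul (sub_nonneg.2 hab)]
  have : IsFiniteMeasure (volume.restrict strip) :=
    isFiniteMeasure_restrict.2 (by simp [hvol])
  have hg_strip : MemLp (fun p : ℝ × ℝ => g p.1 p.2) 2 (volume.restrict strip) :=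
    hg.mono_measure (Measure.restrict_mono hstrip le_rfl)
  have hterm : ∀ n ∈ Finset.range N, ∫ t in (n * dt)..((n + 1) * dt), ∫ x in a..b, c n * g x t
      = c n * ∫ p in slab n, g p.1 p.2 := fun n hn => by
    simp_rw [intervalIntegral.integral_const_mul]
    rw [intervalIntegral_intervalIntegral_eq_setIntegral_Ioo_prod hab
      (mul_le_mul_of_nonneg_right (by linarith) hdt)
      (IntegrableOn.mono_set (hg_strip.integrable one_le_two)
        (hslab n (Finset.mem_range.1 hn)))]
  calc _ = |∑ n ∈ Finset.range N, c n * ∫ p in slab n, g p.1 p.2| := by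
        rw [Finset.sum_congr rfl hterm]
    _ ≤ K * ∫ p in strip, |g p.1 p.2| :=
        abs_sum_mul_setIntegral_le (hg_strip.integrable one_le_two)
          (fun n _ => measurableSet_Ioo.prod measurableSet_Ioo)
          (pairwiseDisjoint_prod_Ioo_mul_succ_mul hdt _)
          (fun n hn => hslab n (Finset.mem_range.1 hn)) hK
          (fun n hn => hc n (Finset.mem_range.1 hn))
    _ ≤ K * (√(volume.real strip) * √(∫ p in strip, g p.1 p.2 ^ 2)) := by
        rw [← measureReal_restrict_apply_univ]
        exact mul_le_mul_of_nonneg_left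
          (integral_abs_le_sqrt_measureReal_mul_sqrt_integral_sq hg_strip) hK
    _ ≤ K * √((b - a) * (N * dt)) * √(∫ p in univ ×ˢ Ioo 0 (N * dt), g p.1 p.2 ^ 2) := by
        rw [measureReal_def, hvol, ENNReal.toReal_ofReal (by positivity), mul_assoc]
        refine mul_le_mul_of_nonneg_left
          (mul_le_mul_of_nonneg_left (Real.sqrt_le_sqrt ?_) (Real.sqrt_nonneg _)) hK
        exact setIntegral_mono_set hg.integrable_sq
          (Eventually.of_forall fun p => sq_nonneg _) hstrip.eventuallyLE

theorem coefficient_perturbation_bound_general (G g : ℝ → ℝ → ℝ) (kh : ℤ → ℝ) (u : ℕ → ℤ → ℝ)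
    (a' b' L V dx dt T : ℝ) (N : ℕ)
    (hdx : 0 < dx) (hdt : 0 < dt) (hT : T = N * dt)
    (hG : ∀ κ₁ κ₂ s : ℝ, s ∈ Set.Icc a' b' → |G κ₁ s - G κ₂ s| ≤ L * |κ₁ - κ₂|)
    (hksum : Summable fun j : ℤ => |kh j - kh (j - 1)|)
    (hkV : (∑' j : ℤ, |kh j - kh (j - 1)|) ≤ V)
    (hu : ∀ n < N, ∀ j : ℤ, u n j ∈ Set.Icc a' b')
    (hg : MemLp (fun p : ℝ × ℝ => g p.1 p.2) 2 (volume.restrict (Set.univ ×ˢ Set.Ioo 0 T))) :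
    |∑' j : ℤ, ∑ n ∈ Finset.range N,
        ∫ t in ((n : ℝ) * dt)..(((n : ℝ) + 1) * dt),
          ∫ x in ((j : ℝ) * dx)..((j : ℝ) * dx + dx / 2),
            (G (kh j) (u n j) - G (kh (j - 1)) (u n j)) * g x t|
      ≤ L * V * Real.sqrt dx * Real.sqrt T *
          Real.sqrt (∫ p in Set.univ ×ˢ Set.Ioo 0 T, (g p.1 p.2) ^ 2) := by
  subst hT
  rcases Nat.eq_zero_or_pos N with rfl | hN
  · simp
  have hL : 0 ≤ L := by simpa using (abs_nonneg _).trans (hG 1 0 (u 0 0) (hu 0 hN 0))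
  set M := √dx * √(N * dt) * √(∫ p in univ ×ˢ Ioo 0 (N * dt), g p.1 p.2 ^ 2)
  have hstrip : ∀ j : ℤ, |∑ n ∈ Finset.range N,
      ∫ t in ((n : ℝ) * dt)..(((n : ℝ) + 1) * dt), ∫ x in ((j : ℝ) * dx)..((j : ℝ) * dx + dx / 2),
        (G (kh j) (u n j) - G (kh (j - 1)) (u n j)) * g x t| ≤ L * |kh j - kh (j - 1)| * M := by
    intro j
    have hwidth : √((j * dx + dx / 2 - j * dx) * (N * dt)) ≤ √dx * √(N * dt) := by
      rw [← Real.sqrt_mul hdx.le]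
      exact Real.sqrt_le_sqrt (mul_le_mul_of_nonneg_right (by linarith) (by positivity))
    refine (abs_sum_integral_strip_le (by linarith) hdt.le (by positivity)
      (fun n hn => hG _ _ _ (hu n hn j)) hg).trans ?_
    calc _ ≤ L * |kh j - kh (j - 1)| * (√dx * √(N * dt)) *
          √(∫ p in univ ×ˢ Ioo 0 (N * dt), g p.1 p.2 ^ 2) := by gcongr
      _ = L * |kh j - kh (j - 1)| * M := mul_assoc _ _ _
  calc _ ≤ ∑' j : ℤ, L * |kh j - kh (j - 1)| * M := by
        rw [← Real.norm_eq_abs]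
        exact tsum_of_norm_bounded ((hksum.mul_left L).mul_right M).hasSum hstrip
    _ = L * (∑' j : ℤ, |kh j - kh (j - 1)|) * M := by rw [tsum_mul_right, tsum_mul_left]
    _ ≤ L * V * M := by gcongr
    _ = _ := by simp only [M]; ring

/-- bound on the perturbation term `Σ_{j,n} ∫∫ (G(k_{j+1/2},u^n_j) −
G(k_{j−1/2},u^n_j)) g` in terms of the Lipschitz constant `L`, the variation bound `V`,
`Δx^{1/2}`, `T^{1/2}` and the `L²` norm of `g` on `ℝ × (0,T)`. -/
theorem coefficient_perturbation_bound (G g : ℝ → ℝ → ℝ) (kh : ℤ → ℝ) (u : ℕ → ℤ → ℝ)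
    (a' b' L V dx dt T : ℝ) (N : ℕ)
    (hdx : 0 < dx) (hdt : 0 < dt) (hT : T = N * dt)
    (hG : ∀ κ₁ κ₂ s : ℝ, s ∈ Set.Icc a' b' → |G κ₁ s - G κ₂ s| ≤ L * |κ₁ - κ₂|)
    (hksum : Summable fun j : ℤ => |kh j - kh (j - 1)|)
    (hkV : (∑' j : ℤ, |kh j - kh (j - 1)|) ≤ V)
    (hu : ∀ n < N, ∀ j : ℤ, u n j ∈ Set.Icc a' b')
    (hgm : Measurable (Function.uncurry g))
    (hg : MemLp (fun p : ℝ × ℝ => g p.1 p.2) 2 (volume.restrict (Set.univ ×ˢ Set.Ioo 0 T))) :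
    |∑' j : ℤ, ∑ n ∈ Finset.range N,
        ∫ t in ((n : ℝ) * dt)..(((n : ℝ) + 1) * dt),
          ∫ x in ((j : ℝ) * dx)..((j : ℝ) * dx + dx / 2),
            (G (kh j) (u n j) - G (kh (j - 1)) (u n j)) * g x t|
      ≤ L * V * Real.sqrt dx * Real.sqrt T *
          Real.sqrt (∫ p in Set.univ ×ˢ Set.Ioo 0 T, (g p.1 p.2) ^ 2) :=
  coefficient_perturbation_bound_general G g kh u a' b' L V dx dt T N hdx hdt hT hG hksum hkV hu hg
end

section
/- Let f ∈ C¹(ℝ) be bounded with bounded derivative and f̂ its Engquist–Osher flux, let k ∈ L^∞(ℝ) ∩ BV(ℝ) with cell averages k_{j+1/2}, let (u^n_j) be grid values vanishing for |j| sufficiently large, for 0 ≤ n ≤ N−1 with T = NΔt, and let f̂^n_{j+1/2} denote the sign-adapted numerical flux. Let φ ∈ C¹(ℝ × [0,T]) with ∂_x φ ∈ L²(ℝ × (0,T)), and set Φ_j(t) = ∫_{x_{j−1/2}}^{x_{j+1/2}} φ(x,t) dx. Then there is an absolute constant C such that |Σ_{n=0}^{N−1} Σ_{j∈ℤ} ∫_{t^n}^{t^{n+1}}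 (f(u^n_j) − f̂^n_{j+1/2})·k_{j+1/2}·D₊Φ_j(t) dt| ≤ C·‖k‖_∞·‖f′‖_∞·Δx^{1/2}·(Δx²Δt Σ_{n=0}^{N−1} Σ_{j∈ℤ} (D₋u^n_j)²)^{1/2}·‖∂_x φ‖_{L²(ℝ×(0,T))}. -/
open MeasureTheory Filter Set

/-!
The summand of index `(n, j)` is a product of three factors. The flux defect
`f(u_j) − f̂_{j+1/2}` is at most `‖f′‖_∞ |u_{j+1} − u_j|`, since `f(u) − f̂(u, v)` and
`f(v) − f̂(u, v)` are half the jump `f(v) − f(u)` plus or minus half the viscosity `∫_u^v |f′|`;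
the average `k_{j+1/2}` is at most `‖k‖_∞`; and `Δx · D₊Φ_j(t)` is the
integral over one cell of `φ(x + Δx, t) − φ(x, t)`, which by the fundamental theorem of calculus
and Cauchy–Schwarz is at most `Δx^{3/2}` times the `L²` norm of `∂ₓφ(·, t)` over the two cells
`[x_{j−1/2}, x_{j+3/2}]`. Cauchy–Schwarz in `t` and then over `(n, j)` finishes the proof; the
two-cell windows cover each point at most twice, which gives the constant `C = √2`.
-/

open intervalIntegral

lemma sq_intervalIntegral_le {h : ℝ → ℝ} {a b : ℝ} (hab : a ≤ b)
    (hi : IntervalIntegrable h volume a b)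
    (hi2 : IntervalIntegrable (fun x => h x ^ 2) volume a b) :
    (∫ x in a..b, h x) ^ 2 ≤ (b - a) * ∫ x in a..b, h x ^ 2 := by
  rcases hab.eq_or_lt with rfl | hlt
  · simp
  set A := b - a
  set B := ∫ x in a..b, h x
  have hexp : ∫ x in a..b, (A * h x - B) ^ 2 = A * (A * (∫ x in a..b, h x ^ 2) - B ^ 2) := by
    have hpoly : ∀ x, (A * h x - B) ^ 2 = A ^ 2 * h x ^ 2 - (2 * A * B * h x - B ^ 2) :=
      fun x => by ring
    simp_rw [hpoly]
    rw [integral_sub (hi2.const_mul _) ((hi.const_mul _).sub intervalIntegrable_const),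
      integral_sub (hi.const_mul _) intervalIntegrable_const, intervalIntegral.integral_const_mul,
      intervalIntegral.integral_const_mul, intervalIntegral.integral_const, smul_eq_mul]
    ring
  have hnonneg : 0 ≤ A * (A * (∫ x in a..b, h x ^ 2) - B ^ 2) :=
    hexp ▸ integral_nonneg hab fun x _ => sq_nonneg _
  exact sub_nonneg.1 ((mul_nonneg_iff_of_pos_left (show 0 < A from sub_pos.2 hlt)).1 hnonneg)

lemma abs_intervalIntegral_le_sqrt_mul_sqrt {h : ℝ → ℝ} {a b : ℝ} (hab : a ≤ b)
    (hi : IntervalIntegrable h volume a b)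
    (hi2 : IntervalIntegrable (fun x => h x ^ 2) volume a b) :
    |∫ x in a..b, h x| ≤ √(b - a) * √(∫ x in a..b, h x ^ 2) := by
  rw [← Real.sqrt_mul (sub_nonneg.2 hab), ← Real.sqrt_sq_eq_abs]
  exact Real.sqrt_le_sqrt (sq_intervalIntegral_le hab hi hi2)

lemma abs_sub_le_sqrt_mul_sqrt_integral_deriv_sq {h : ℝ → ℝ} (hh : ContDiff ℝ 1 h)
    {a b x y : ℝ} (hax : a ≤ x) (hxy : x ≤ y) (hyb : y ≤ b) :
    |h y - h x| ≤ √(y - x) * √(∫ s in a..b, deriv h s ^ 2) := by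
  have hd : Continuous (deriv h) := hh.continuous_deriv le_rfl
  rw [← integral_deriv_eq_sub (fun s _ => (hh.differentiable one_ne_zero).differentiableAt)
    (hd.intervalIntegrable x y)]
  refine (abs_intervalIntegral_le_sqrt_mul_sqrt hxy (hd.intervalIntegrable _ _)
    ((hd.pow 2).intervalIntegrable _ _)).trans ?_
  gcongr
  exact integral_mono_interval hax hxy hyb (Eventually.of_forall fun s => sq_nonneg _)
    ((hd.pow 2).intervalIntegrable _ _)

lemma abs_integral_translate_sub_le {h : ℝ → ℝ} (hh : ContDiff ℝ 1 h) {d : ℝ} (hd : 0 < d)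
    (c : ℝ) :
    |(∫ x in (c + d)..(c + d + d), h x) - ∫ x in c..(c + d), h x|
      ≤ d * √d * √(∫ s in c..(c + 2 * d), deriv h s ^ 2) := by
  have hc : Continuous h := hh.continuous
  have hshift : (∫ x in (c + d)..(c + d + d), h x) - ∫ x in c..(c + d), h x
      = ∫ x in c..(c + d), (h (x + d) - h x) := by
    rw [← integral_comp_add_right h d]
    exact (integral_sub (f := fun x => h (x + d))
      ((hc.comp (continuous_add_const d)).intervalIntegrable _ _) (hc.intervalIntegrable _ _)).symm
  have hbound : ∀ x ∈ uIoc c (c + d),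
      ‖h (x + d) - h x‖ ≤ √d * √(∫ s in c..(c + 2 * d), deriv h s ^ 2) := by
    intro x hx
    rw [uIoc_of_le (by linarith)] at hx
    simpa using abs_sub_le_sqrt_mul_sqrt_integral_deriv_sq hh hx.1.le
      (by linarith : x ≤ x + d) (by linarith [hx.2])
  rw [hshift]
  simpa [abs_of_pos hd, mul_comm, mul_left_comm, mul_assoc] using
    norm_integral_le_of_norm_le_const hbound

lemma sum_integral_two_step_le {h : ℝ → ℝ} (hh : Continuous h) (h0 : ∀ x, 0 ≤ h x)
    {a : ℕ → ℝ} (ha : Monotone a) (K : ℕ) :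
    ∑ i ∈ Finset.range K, ∫ x in a i..a (i + 2), h x ≤ 2 * ∫ x in a 0..a (K + 1), h x := by
  have hI : ∀ p q, IntervalIntegrable h volume p q := fun _ _ => hh.intervalIntegrable _ _
  have hsplit : ∀ i, ∫ x in a i..a (i + 2), h x
      = (∫ x in a i..a (i + 1), h x) + ∫ x in a (i + 1)..a (i + 1 + 1), h x :=
    fun i => (integral_add_adjacent_intervals (hI _ _) (hI _ _)).symm
  have hmono : ∀ {p q}, a 0 ≤ p → p ≤ q → q ≤ a (K + 1) →
      ∫ x in p..q, h x ≤ ∫ x in a 0..a (K + 1), h x :=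
    fun hp hpq hq => integral_mono_interval hp hpq hq (ae_of_all _ fun x => h0 x) (hI _ _)
  rw [Finset.sum_congr rfl fun i _ => hsplit i, Finset.sum_add_distrib,
    sum_integral_adjacent_intervals fun k _ => hI _ _,
    sum_integral_adjacent_intervals (a := fun i => a (i + 1)) fun k _ => hI _ _]
  linarith [hmono le_rfl (ha (Nat.zero_le K)) (ha K.le_succ),
    hmono (ha (Nat.zero_le 1)) (ha (by omega)) le_rfl]

lemma sum_integral_uniform_partition {F : ℝ → ℝ} (hF : Continuous F) (dt : ℝ) (N : ℕ) :
    ∑ n ∈ Finset.range N, ∫ t in ((n : ℝ) * dt)..(((n : ℝ) + 1) * dt), F t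
      = ∫ t in (0 : ℝ)..(N * dt), F t := by
  simpa using sum_integral_adjacent_intervals (a := fun n : ℕ => (n : ℝ) * dt)
    fun k _ => hF.intervalIntegrable _ _

lemma integral_integral_le_setIntegral_prod {G : ℝ × ℝ → ℝ} (hG : Continuous G)
    (h0 : ∀ p, 0 ≤ G p) {L R T : ℝ} (hLR : L ≤ R) (hT : 0 ≤ T)
    (hint : IntegrableOn G (univ ×ˢ Ioo 0 T)) :
    ∫ t in (0 : ℝ)..T, ∫ x in L..R, G (x, t) ≤ ∫ p in univ ×ˢ Ioo 0 T, G p := by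
  have hswap : IntegrableOn (fun z : ℝ × ℝ => G z.swap) (Ioo 0 T ×ˢ Ioc L R) :=
    ((hG.comp continuous_swap).continuousOn.integrableOn_compact
      (isCompact_Icc.prod isCompact_Icc)).mono_set
      (prod_mono Ioo_subset_Icc_self Ioc_subset_Icc_self)
  calc ∫ t in (0 : ℝ)..T, ∫ x in L..R, G (x, t)
      = ∫ t in Ioo 0 T, ∫ x in Ioc L R, G (x, t) := by
        simp_rw [integral_of_le hT, integral_of_le hLR, integral_Ioc_eq_integral_Ioo]
    _ = ∫ z in Ioo 0 T ×ˢ Ioc L R, G z.swap := (setIntegral_prod _ hswap).symm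
    _ = ∫ p in Ioc L R ×ˢ Ioo 0 T, G p := setIntegral_prod_swap _ _ _
    _ ≤ _ := setIntegral_mono_set hint (ae_of_all _ fun p => h0 p)
        (prod_mono (subset_univ _) le_rfl).eventuallyLE

lemma abs_sum_le_mul_sqrt_mul_sqrt {ι : Type*} (s : Finset ι) {x a B : ι → ℝ} {K : ℝ}
    (hK : 0 ≤ K) (hx : ∀ i ∈ s, |x i| ≤ K * |a i| * √(B i)) (hB : ∀ i ∈ s, 0 ≤ B i) :
    |∑ i ∈ s, x i| ≤ K * √(∑ i ∈ s, a i ^ 2) * √(∑ i ∈ s, B i) := by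
  calc |∑ i ∈ s, x i| ≤ ∑ i ∈ s, |x i| := Finset.abs_sum_le_sum_abs _ _
    _ ≤ ∑ i ∈ s, K * (|a i| * √(B i)) :=
        Finset.sum_le_sum fun i hi => (hx i hi).trans_eq (mul_assoc _ _ _)
    _ = K * ∑ i ∈ s, |a i| * √(B i) := (Finset.mul_sum _ _ _).symm
    _ ≤ K * (√(∑ i ∈ s, |a i| ^ 2) * √(∑ i ∈ s, √(B i) ^ 2)) := by
        gcongr; exact Real.sum_mul_le_sqrt_mul_sqrt _ _ _
    _ = K * √(∑ i ∈ s, a i ^ 2) * √(∑ i ∈ s, B i) := by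
        rw [Finset.sum_congr rfl fun i hi => Real.sq_sqrt (hB i hi)]
        simp_rw [sq_abs]
        ring

lemma tsum_eq_sum_range_of_eq_zero {M : Type*} [AddCommMonoid M] [TopologicalSpace M]
    {F : ℤ → M} (m : ℤ) (K : ℕ) (hF : ∀ j, j < m ∨ m + K ≤ j → F j = 0) :
    ∑' j, F j = ∑ i ∈ Finset.range K, F (m + i) := by
  rw [← Finset.sum_image (g := fun i : ℕ => m + i) fun i _ i' _ h => by simpa using h]
  refine tsum_eq_sum fun j hj => hF j ?_
  by_contra! h
  exact hj (Finset.mem_image.2 ⟨(j - m).toNat, Finset.mem_range.2 (by omega), by omega⟩)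

lemma abs_le_supNorm {g : ℝ → ℝ} (hg : ∃ C, ∀ x, |g x| ≤ C) (x : ℝ) : |g x| ≤ supNorm g := by
  obtain ⟨C, hC⟩ := hg
  exact le_ciSup ⟨C, by rintro _ ⟨y, rfl⟩; exact hC y⟩ x

lemma supNorm_nonneg (g : ℝ → ℝ) : 0 ≤ supNorm g :=
  Real.iSup_nonneg fun _ => abs_nonneg _

lemma abs_sub_eoFlux_le {f : ℝ → ℝ} {M : ℝ} (hf : Differentiable ℝ f) (hM : ∀ x, |deriv f x| ≤ M)
    {x a b : ℝ} (hx : x = a ∨ x = b) : |f x - eoFlux f a b| ≤ M * |b - a| := by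
  have hlip : |f b - f a| ≤ M * |b - a| :=
    convex_univ.norm_image_sub_le_of_norm_deriv_le (fun y _ => hf y) (fun y _ => hM y)
      trivial trivial
  have hvisc : abs (∫ s in a..b, |deriv f s|) ≤ M * |b - a| := by
    simpa using norm_integral_le_of_norm_le_const (f := fun s => |deriv f s|) (a := a) (b := b)
      (fun y _ => by rw [Real.norm_eq_abs, abs_abs]; exact hM y)
  have hcentre : |f x - (f a + f b) / 2| = |f b - f a| / 2 := by
    rcases hx with rfl | rfl
    · rw [show f x - (f x + f b) / 2 = -((f b - f x) / 2) by ring, abs_neg, abs_div, abs_two]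
    · rw [show f x - (f a + f x) / 2 = (f x - f a) / 2 by ring, abs_div, abs_two]
  calc |f x - eoFlux f a b|
      = |(f x - (f a + f b) / 2) + (∫ s in a..b, |deriv f s|) / 2| := by rw [eoFlux]; ring_nf
    _ ≤ |f x - (f a + f b) / 2| + |(∫ s in a..b, |deriv f s|) / 2| := abs_add_le _ _
    _ = |f b - f a| / 2 + abs (∫ s in a..b, |deriv f s|) / 2 := by
        rw [hcentre, abs_div, abs_two]
    _ ≤ M * |b - a| := by linarith

lemma abs_sub_signFlux_le {f : ℝ → ℝ} {M : ℝ} (hf : Differentiable ℝ f)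
    (hM : ∀ x, |deriv f x| ≤ M) (kh v : ℤ → ℝ) (j : ℤ) :
    |f (v j) - signFlux f kh v j| ≤ M * |v (j + 1) - v j| := by
  unfold signFlux
  split_ifs
  · exact abs_sub_eoFlux_le hf hM (.inl rfl)
  · rw [abs_sub_comm (v (j + 1))]; exact abs_sub_eoFlux_le hf hM (.inr rfl)

lemma signFlux_of_eq (f : ℝ → ℝ) (kh : ℤ → ℝ) {v : ℤ → ℝ} {j : ℤ} (h : v (j + 1) = v j) :
    signFlux f kh v j = f (v j) := by
  simp [signFlux, eoFlux, h]

lemma abs_kAvg_le {k : ℝ → ℝ} {M : ℝ} (hk : ∀ x, |k x| ≤ M) {dx : ℝ} (hdx : 0 < dx) (j : ℤ) :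
    |kAvg k dx j| ≤ M := by
  have h := norm_integral_le_of_norm_le_const (f := k) (a := j * dx) (b := j * dx + dx)
    (fun x _ => by rw [Real.norm_eq_abs]; exact hk x)
  rw [add_sub_cancel_left, Real.norm_eq_abs, abs_of_pos hdx] at h
  rw [kAvg, abs_mul, abs_of_pos (one_div_pos.2 hdx), one_div, inv_mul_le_iff₀ hdx, mul_comm dx]
  exact h

lemma finSupp.exists_uniform_bound {u : ℕ → ℤ → ℝ} (hu : finSupp u) (N : ℕ) :
    ∃ J : ℕ, ∀ n < N, ∀ j : ℤ, (J : ℤ) < |j| → u n j = 0 := by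
  choose J hJ using hu
  refine ⟨(Finset.range N).sup J, fun n hn j hj => hJ n j (lt_of_le_of_lt ?_ hj)⟩
  exact_mod_cast Finset.le_sup (Finset.mem_range.2 hn)

lemma finSupp.summable_sq_Dm {u : ℕ → ℤ → ℝ} (hu : finSupp u) (dx : ℝ) (n : ℕ) :
    Summable fun j => Dm dx (u n) j ^ 2 := by
  obtain ⟨J, hJ⟩ := hu n
  refine summable_of_ne_finset_zero (s := Finset.Icc (-(J : ℤ)) (J + 1)) fun j hj => ?_
  rw [Finset.mem_Icc] at hj
  rw [Dm, hJ j (by rw [lt_abs]; omega), hJ (j - 1) (by rw [lt_abs]; omega)]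
  simp

lemma sum_sq_sub_le_sq_mul_tsum_sq_Dm {v : ℤ → ℝ} {dx : ℝ} (hdx : dx ≠ 0)
    (hv : Summable fun j => Dm dx v j ^ 2) (m : ℤ) (K : ℕ) :
    ∑ i ∈ Finset.range K, (v (m + i + 1) - v (m + i)) ^ 2 ≤ dx ^ 2 * ∑' j, Dm dx v j ^ 2 := by
  have hDm : ∀ i : ℕ, (v (m + i + 1) - v (m + i)) ^ 2 = dx ^ 2 * Dm dx v (m + i + 1) ^ 2 :=
    fun i => by rw [Dm, add_sub_cancel_right]; field_simp
  have himage : ∑ i ∈ Finset.range K, Dm dx v (m + i + 1) ^ 2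
      = ∑ j ∈ (Finset.range K).image (fun i : ℕ => m + i + 1), Dm dx v j ^ 2 :=
    (Finset.sum_image (f := fun j => Dm dx v j ^ 2) (g := fun i : ℕ => m + i + 1)
      fun i _ i' _ h => by simpa using h).symm
  rw [Finset.sum_congr rfl fun i _ => hDm i, ← Finset.mul_sum, himage]
  gcongr
  exact hv.sum_le_tsum _ fun j _ => sq_nonneg _

noncomputable def partialX (φ : ℝ × ℝ → ℝ) (p : ℝ × ℝ) : ℝ := deriv (fun y => φ (y, p.2)) p.1

section partialX

variable {φ : ℝ × ℝ → ℝ}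

lemma contDiff_slice (hφ : ContDiff ℝ 1 φ) (t : ℝ) : ContDiff ℝ 1 fun y => φ (y, t) :=
  hφ.comp (contDiff_id.prodMk contDiff_const)

lemma continuous_partialX (hφ : ContDiff ℝ 1 φ) : Continuous (partialX φ) := by
  have hfderiv : partialX φ = fun p => fderiv ℝ φ p (1, 0) := by
    funext p
    exact (((hφ.differentiable one_ne_zero) p).hasFDerivAt.comp_hasDerivAt p.1
      ((hasDerivAt_id p.1).prodMk (hasDerivAt_const p.1 p.2))).deriv
  rw [hfderiv]
  exact (hφ.continuous_fderiv one_ne_zero).clm_apply continuous_const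

lemma abs_integral_forwardDiff_cellIntegral_le (hφ : ContDiff ℝ 1 φ) {dx : ℝ} (hdx : 0 < dx)
    {t₀ t₁ : ℝ} (ht : t₀ ≤ t₁) (c : ℝ) :
    |∫ t in t₀..t₁,
        ((∫ x in (c + dx)..(c + dx + dx), φ (x, t)) - ∫ x in c..(c + dx), φ (x, t)) / dx|
      ≤ √dx * √((t₁ - t₀) * ∫ t in t₀..t₁, ∫ y in c..(c + 2 * dx), partialX φ (y, t) ^ 2) := by
  set q : ℝ → ℝ := fun t => ∫ y in c..(c + 2 * dx), partialX φ (y, t) ^ 2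
  have hq : Continuous q := continuous_parametric_intervalIntegral_of_continuous'
    (f := fun t y => partialX φ (y, t) ^ 2)
    (by exact ((continuous_partialX hφ).pow 2).comp continuous_swap) _ _
  have hq0 : ∀ t, 0 ≤ q t := fun t => integral_nonneg (by linarith) fun _ _ => sq_nonneg _
  have hcell : ∀ t, ‖((∫ x in (c + dx)..(c + dx + dx), φ (x, t)) - ∫ x in c..(c + dx), φ (x, t))
      / dx‖ ≤ √dx * √(q t) := by
    intro t
    rw [Real.norm_eq_abs, abs_div, abs_of_pos hdx, div_le_iff₀ hdx]
    calc _ ≤ dx * √dx * √(q t) := abs_integral_translate_sub_le (contDiff_slice hφ t) hdx c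
      _ = √dx * √(q t) * dx := by ring
  calc _ ≤ ∫ t in t₀..t₁, √dx * √(q t) :=
        norm_integral_le_of_norm_le ht (ae_of_all _ fun t _ => hcell t)
          ((continuous_const.mul hq.sqrt).intervalIntegrable _ _)
    _ = √dx * ∫ t in t₀..t₁, √(q t) := intervalIntegral.integral_const_mul _ _
    _ ≤ √dx * (√(t₁ - t₀) * √(∫ t in t₀..t₁, √(q t) ^ 2)) := by
        gcongr
        exact (le_abs_self _).trans (abs_intervalIntegral_le_sqrt_mul_sqrt ht
          (hq.sqrt.intervalIntegrable _ _) ((hq.sqrt.pow 2).intervalIntegrable _ _))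
    _ = √dx * √((t₁ - t₀) * ∫ t in t₀..t₁, q t) := by
        simp_rw [Real.sq_sqrt (hq0 _), Real.sqrt_mul (sub_nonneg.2 ht)]

end partialX

noncomputable def consistencyTerm (f k : ℝ → ℝ) (φ : ℝ × ℝ → ℝ) (u : ℕ → ℤ → ℝ) (dx dt : ℝ)
    (n : ℕ) (j : ℤ) : ℝ :=
  ∫ t in ((n : ℝ) * dt)..(((n : ℝ) + 1) * dt),
    (f (u n j) - signFlux f (kAvg k dx) (u n) j) * kAvg k dx j *
      (((∫ x in (((j : ℝ) + 1) * dx - dx / 2)..(((j : ℝ) + 1) * dx + dx / 2), φ (x, t)) -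
          ∫ x in ((j : ℝ) * dx - dx / 2)..((j : ℝ) * dx + dx / 2), φ (x, t)) / dx)

noncomputable def boxEnergy (φ : ℝ × ℝ → ℝ) (dx dt : ℝ) (n : ℕ) (j : ℤ) : ℝ :=
  ∫ t in ((n : ℝ) * dt)..(((n : ℝ) + 1) * dt),
    ∫ y in ((j : ℝ) * dx - dx / 2)..((j : ℝ) * dx - dx / 2 + 2 * dx), partialX φ (y, t) ^ 2

lemma consistencyTerm_eq_zero_of_eq (f k : ℝ → ℝ) (φ : ℝ × ℝ → ℝ) {u : ℕ → ℤ → ℝ} (dx dt : ℝ)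
    {n : ℕ} {j : ℤ} (h : u n (j + 1) = u n j) : consistencyTerm f k φ u dx dt n j = 0 := by
  simp [consistencyTerm, signFlux_of_eq f _ h]

lemma abs_consistencyTerm_le {f k : ℝ → ℝ} {φ : ℝ × ℝ → ℝ} {Mf Mk dx dt : ℝ}
    (hf : Differentiable ℝ f) (hMf : ∀ x, |deriv f x| ≤ Mf) (hMk : ∀ x, |k x| ≤ Mk)
    (hφ : ContDiff ℝ 1 φ) (hdx : 0 < dx) (hdt : 0 < dt) (u : ℕ → ℤ → ℝ) (n : ℕ) (j : ℤ) :
    |consistencyTerm f k φ u dx dt n j|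
      ≤ Mk * Mf * √dx * |u n (j + 1) - u n j| * √(dt * boxEnergy φ dx dt n j) := by
  set c : ℝ := (j : ℝ) * dx - dx / 2
  have hcells : consistencyTerm f k φ u dx dt n j
      = (f (u n j) - signFlux f (kAvg k dx) (u n) j) * kAvg k dx j *
        ∫ t in ((n : ℝ) * dt)..(((n : ℝ) + 1) * dt),
          ((∫ x in (c + dx)..(c + dx + dx), φ (x, t)) - ∫ x in c..(c + dx), φ (x, t)) / dx := by
    rw [consistencyTerm, ← intervalIntegral.integral_const_mul]
    congr! 6 <;> ring
  have hstep : ((n : ℝ) + 1) * dt - n * dt = dt := by ring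
  have hφbound := abs_integral_forwardDiff_cellIntegral_le hφ hdx
    (by nlinarith : (n : ℝ) * dt ≤ (n + 1) * dt) c
  rw [hstep] at hφbound
  rw [hcells, abs_mul, abs_mul]
  have hMf0 : 0 ≤ Mf := (abs_nonneg _).trans (hMf 0)
  have hMk0 : 0 ≤ Mk := (abs_nonneg _).trans (hMk 0)
  calc _ ≤ Mf * |u n (j + 1) - u n j| * Mk * (√dx * √(dt * boxEnergy φ dx dt n j)) :=
        mul_le_mul (mul_le_mul (abs_sub_signFlux_le hf hMf _ _ j) (abs_kAvg_le hMk hdx j)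
          (abs_nonneg _) (by positivity)) hφbound (abs_nonneg _) (by positivity)
    _ = _ := by ring

lemma boxEnergy_nonneg (φ : ℝ × ℝ → ℝ) {dx dt : ℝ} (hdx : 0 ≤ dx) (hdt : 0 ≤ dt) (n : ℕ)
    (j : ℤ) : 0 ≤ boxEnergy φ dx dt n j :=
  integral_nonneg (by nlinarith) fun _ _ => integral_nonneg (by linarith) fun _ _ => sq_nonneg _

lemma sum_boxEnergy_le {φ : ℝ × ℝ → ℝ} (hφ : ContDiff ℝ 1 φ) {dx dt : ℝ} (hdx : 0 < dx)
    (hdt : 0 < dt) (N K : ℕ) (m : ℤ)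
    (hint : IntegrableOn (fun p => partialX φ p ^ 2) (univ ×ˢ Ioo 0 (N * dt))) :
    ∑ n ∈ Finset.range N, ∑ i ∈ Finset.range K, boxEnergy φ dx dt n (m + i)
      ≤ 2 * ∫ p in univ ×ˢ Ioo 0 (N * dt), partialX φ p ^ 2 := by
  set G : ℝ × ℝ → ℝ := fun p => partialX φ p ^ 2
  have hG : Continuous G := (continuous_partialX hφ).pow 2
  have hparam : ∀ p q, Continuous fun t => ∫ x in p..q, G (x, t) := fun p q =>
    continuous_parametric_intervalIntegral_of_continuous' (f := fun t x => G (x, t))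
      (by exact hG.comp continuous_swap) p q
  set a : ℕ → ℝ := fun i => (m : ℝ) * dx - dx / 2 + i * dx
  have ha : Monotone a := fun i i' h => by simp only [a]; gcongr
  have hwindows : ∀ t, ∑ i ∈ Finset.range K,
      ∫ y in (((m + i : ℤ) : ℝ) * dx - dx / 2)..(((m + i : ℤ) : ℝ) * dx - dx / 2 + 2 * dx), G (y, t)
        ≤ 2 * ∫ x in a 0..a (K + 1), G (x, t) := by
    intro t
    convert sum_integral_two_step_le (h := fun y => G (y, t))
      (hG.comp (continuous_id.prodMk continuous_const)) (fun x => sq_nonneg _) ha K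
      using 3 with i <;> · simp only [a]; push_cast; ring
  calc ∑ n ∈ Finset.range N, ∑ i ∈ Finset.range K, boxEnergy φ dx dt n (m + i)
      = ∑ n ∈ Finset.range N, ∫ t in ((n : ℝ) * dt)..(((n : ℝ) + 1) * dt), ∑ i ∈ Finset.range K,
          ∫ y in (((m + i : ℤ) : ℝ) * dx - dx / 2)..(((m + i : ℤ) : ℝ) * dx - dx / 2 + 2 * dx),
            G (y, t) := by
        simp_rw [boxEnergy]
        exact Finset.sum_congr rfl fun n _ =>
          (integral_finsetSum fun i _ => (hparam _ _).intervalIntegrable _ _).symm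
    _ = ∫ t in (0 : ℝ)..(N * dt), ∑ i ∈ Finset.range K,
          ∫ y in (((m + i : ℤ) : ℝ) * dx - dx / 2)..(((m + i : ℤ) : ℝ) * dx - dx / 2 + 2 * dx),
            G (y, t) :=
        sum_integral_uniform_partition (continuous_finsetSum _ fun i _ => hparam _ _) dt N
    _ ≤ ∫ t in (0 : ℝ)..(N * dt), 2 * ∫ x in a 0..a (K + 1), G (x, t) :=
        integral_mono_on (by positivity)
          ((continuous_finsetSum _ fun i _ => hparam _ _).intervalIntegrable _ _)
          ((continuous_const.mul (hparam _ _)).intervalIntegrable _ _) fun t _ => hwindows t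
    _ ≤ 2 * ∫ p in univ ×ˢ Ioo 0 (N * dt), G p := by
        rw [intervalIntegral.integral_const_mul]
        gcongr
        exact integral_integral_le_setIntegral_prod hG (fun p => sq_nonneg _)
          (ha (Nat.zero_le _)) (by positivity) hint

lemma abs_sum_consistencyTerm_window_le {f k : ℝ → ℝ} {φ : ℝ × ℝ → ℝ} {u : ℕ → ℤ → ℝ}
    {Mf Mk dx dt : ℝ} (hf : Differentiable ℝ f) (hMf : ∀ x, |deriv f x| ≤ Mf)
    (hMk : ∀ x, |k x| ≤ Mk) (hφ : ContDiff ℝ 1 φ) (hdx : 0 < dx) (hdt : 0 < dt)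
    (hu : ∀ n, Summable fun j => Dm dx (u n) j ^ 2) {N : ℕ}
    (hint : IntegrableOn (fun p => partialX φ p ^ 2) (univ ×ˢ Ioo 0 (N * dt))) (m : ℤ) (K : ℕ) :
    |∑ n ∈ Finset.range N, ∑ i ∈ Finset.range K, consistencyTerm f k φ u dx dt n (m + i)|
      ≤ √2 * Mk * Mf * √dx * √(dx ^ 2 * dt * ∑ n ∈ Finset.range N, ∑' j, Dm dx (u n) j ^ 2)
        * √(∫ p in univ ×ˢ Ioo 0 (N * dt), partialX φ p ^ 2) := by
  have hK : 0 ≤ Mk * Mf * √dx :=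
    mul_nonneg (mul_nonneg ((abs_nonneg _).trans (hMk 0)) ((abs_nonneg _).trans (hMf 0)))
      (Real.sqrt_nonneg _)
  have hsq : ∑ p ∈ Finset.range N ×ˢ Finset.range K, (u p.1 (m + p.2 + 1) - u p.1 (m + p.2)) ^ 2
      ≤ dx ^ 2 * ∑ n ∈ Finset.range N, ∑' j, Dm dx (u n) j ^ 2 := by
    rw [Finset.sum_product, Finset.mul_sum]
    exact Finset.sum_le_sum fun n _ => sum_sq_sub_le_sq_mul_tsum_sq_Dm hdx.ne' (hu n) m K
  have hbox : ∑ p ∈ Finset.range N ×ˢ Finset.range K, dt * boxEnergy φ dx dt p.1 (m + p.2)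
      ≤ dt * (2 * ∫ p in univ ×ˢ Ioo 0 (N * dt), partialX φ p ^ 2) := by
    rw [← Finset.mul_sum, Finset.sum_product]
    gcongr
    exact sum_boxEnergy_le hφ hdx hdt N K m hint
  have hS : 0 ≤ ∑ n ∈ Finset.range N, ∑' j, Dm dx (u n) j ^ 2 :=
    Finset.sum_nonneg fun n _ => tsum_nonneg fun j => sq_nonneg _
  have hI : 0 ≤ ∫ p in univ ×ˢ Ioo 0 (N * dt), partialX φ p ^ 2 :=
    integral_nonneg fun p => sq_nonneg _
  rw [← Finset.sum_product']
  refine (abs_sum_le_mul_sqrt_mul_sqrt _ hK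
    (fun p _ => abs_consistencyTerm_le hf hMf hMk hφ hdx hdt u p.1 _)
    fun p _ => mul_nonneg hdt.le (boxEnergy_nonneg φ hdx.le hdt.le _ _)).trans ?_
  grw [hsq, hbox]
  generalize ∑ n ∈ Finset.range N, ∑' j, Dm dx (u n) j ^ 2 = S at hS ⊢
  generalize ∫ p in univ ×ˢ Ioo 0 (N * dt), partialX φ p ^ 2 = I at hI ⊢
  rw [Real.sqrt_mul' _ hS, Real.sqrt_mul' _ hS, Real.sqrt_mul' _ hdt.le,
    Real.sqrt_mul' _ (by positivity : 0 ≤ 2 * I), Real.sqrt_mul' _ hI]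
  exact le_of_eq (by ring)

/-- there is an absolute constant `C` bounding the consistency-error sum
`Σ_{n,j} ∫ (f(u^n_j) − f̂^n_{j+1/2}) k_{j+1/2} D₊Φ_j(t) dt` in terms of `‖k‖_∞`, `‖f′‖_∞`,
`Δx^{1/2}`, the discrete space-time gradient, and the `L²` norm of `∂ₓφ`. -/
theorem consistency_error_bound :
    ∃ C : ℝ, 0 < C ∧
      ∀ (f k : ℝ → ℝ) (φ : ℝ × ℝ → ℝ) (u : ℕ → ℤ → ℝ) (dx dt T : ℝ) (N : ℕ),
        0 < dx → 0 < dt → T = N * dt →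
        ContDiff ℝ 1 f → (∃ C', ∀ x, |f x| ≤ C') → (∃ C', ∀ x, |deriv f x| ≤ C') →
        (∃ C', ∀ x, |k x| ≤ C') → BoundedVariationOn k Set.univ →
        LocallyIntegrable k volume →
        finSupp u →
        ContDiff ℝ 1 φ →
        MemLp (fun p : ℝ × ℝ => deriv (fun y => φ (y, p.2)) p.1) 2
          (volume.restrict (Set.univ ×ˢ Set.Ioo 0 T)) →
        |∑ n ∈ Finset.range N, ∑' j : ℤ,
            ∫ t in ((n : ℝ) * dt)..(((n : ℝ) + 1) * dt),
              (f (u n j) - signFlux f (kAvg k dx) (u n) j) * kAvg k dx j *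
                (((∫ x in (((j : ℝ) + 1) * dx - dx / 2)..(((j : ℝ) + 1) * dx + dx / 2), φ (x, t)) -
                    ∫ x in ((j : ℝ) * dx - dx / 2)..((j : ℝ) * dx + dx / 2), φ (x, t)) / dx)|
          ≤ C * supNorm k * supNorm (deriv f) * Real.sqrt dx *
              Real.sqrt (dx ^ 2 * dt *
                ∑ n ∈ Finset.range N, ∑' j : ℤ, (Dm dx (u n) j) ^ 2) *
              Real.sqrt (∫ p in Set.univ ×ˢ Set.Ioo 0 T,
                (deriv (fun y => φ (y, p.2)) p.1) ^ 2) := by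
  refine ⟨√2, by positivity, ?_⟩
  intro f k φ u dx dt T N hdx hdt hT hf _ hdf hk _ _ hu hφ hL2
  subst hT
  obtain ⟨J, hJ⟩ := hu.exists_uniform_bound N
  -- `u^n` vanishes off `[-J, J]`, so only the cells `j ∈ [-J-1, J]` contribute
  have hcollapse : ∀ n ∈ Finset.range N, ∑' j, consistencyTerm f k φ u dx dt n j
      = ∑ i ∈ Finset.range (2 * J + 2), consistencyTerm f k φ u dx dt n (-(J + 1) + i) := by
    intro n hn
    refine tsum_eq_sum_range_of_eq_zero _ _ fun j hj => consistencyTerm_eq_zero_of_eq _ _ _ _ _ ?_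
    rw [hJ n (Finset.mem_range.1 hn) j (by rw [lt_abs]; omega),
      hJ n (Finset.mem_range.1 hn) (j + 1) (by rw [lt_abs]; omega)]
  have hbound := abs_sum_consistencyTerm_window_le (hf.differentiable one_ne_zero)
    (abs_le_supNorm hdf) (abs_le_supNorm hk) hφ hdx hdt (hu.summable_sq_Dm dx)
    hL2.integrable_sq (-(J + 1)) (2 * J + 2)
  rw [← Finset.sum_congr rfl hcollapse] at hbound
  exact hbound
end
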